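/- arXiv:2005.12602 — 6 statements merged into one kernel-verified Lean document; each statement's English description precedes it below -/
import Mathlib

section
/- Let A be the 3×3 real matrix with rows (a, b, υ-a-b), (c, d, υ-c-d), (e, f, υ-e-f), where υ ≠ 0. Suppose α₁ ≠ 2υ and α₁² = 4α₀, where α₀ = det(A)/υ and α₁ = tr(A) - υ. Then the eigenvalue α₁/2 (which has algebraic multiplicity 2) has geometric multiplicity 2, i.e. A is diagonalizable, if and only if c = e, b = f, and d - a + e - f = 0. -/
/-!
The all-ones vector `𝟙` is an eigenvector of `A` for `υ`, which splits the factor `X - υ` off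
the characteristic polynomial; the remaining quadratic is read off from the identity
`υ · (sum of principal 2×2 minors) = υ² (tr A - υ) + det A`. When `α₁² = 4α₀` the quadratic
is `(X - α₁/2)²`, and `α₁ ≠ 2υ` keeps its root away from `υ`.

For `B = A - (α₁/2) • 1` we have `B 𝟙 = (υ - α₁/2) 𝟙 ≠ 0`, so `𝟙` lies in the column space
of `B`. Hence `dim ker B = 2` iff `rank B = 1` iff the column space is the line through `𝟙`,
i.e. iff all rows of `B` coincide; for the parametrised matrix this is `c = e`, `b = f`,
`d - a + e - f = 0`.
-/

open Polynomial Matrix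

theorem Submodule.mem_span_singleton_one_iff {K m : Type*} [Field K] [Nonempty m] {v : m → K} :
    v ∈ K ∙ (1 : m → K) ↔ ∀ i j, v i = v j := by
  rw [Submodule.mem_span_singleton]
  constructor
  · rintro ⟨a, rfl⟩ i j
    rfl
  · intro h
    obtain ⟨i₀⟩ := ‹Nonempty m›
    exact ⟨v i₀, funext fun i => by simp [h i₀ i]⟩

namespace Matrix

variable {K : Type*} [Field K]

theorem charpoly_eq_of_mulVec_one_eq {A : Matrix (Fin 3) (Fin 3) K} {υ : K} (hυ : υ ≠ 0)
    (hA : A *ᵥ 1 = υ • 1) :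
    A.charpoly = (X - C υ) * (X ^ 2 - C (A.trace - υ) * X + C (A.det / υ)) := by
  have hrow (i : Fin 3) : A i 2 = υ - A i 0 - A i 1 := by
    have := congrFun hA i
    simp only [mulVec, dotProduct, Fin.sum_univ_three, Pi.one_apply, mul_one, Pi.smul_apply,
      smul_eq_mul] at this
    linear_combination this
  obtain ⟨q, hq⟩ : ∃ q, A.det = υ * q := ⟨A.det / υ, (mul_div_cancel₀ _ hυ).symm⟩
  -- the `X`-coefficient of the charpoly is the sum of the principal 2×2 minors
  have hminors : A 0 0 * A 1 1 - A 0 1 * A 1 0 + (A 0 0 * A 2 2 - A 0 2 * A 2 0)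
      + (A 1 1 * A 2 2 - A 1 2 * A 2 1) = υ * (A.trace - υ) + q := by
    refine mul_left_cancel₀ hυ ?_
    rw [trace_fin_three, hrow 0, hrow 1, hrow 2]
    rw [det_fin_three, hrow 0, hrow 1, hrow 2] at hq
    linear_combination hq
  have hminorsC := congrArg C hminors
  have hdetC := congrArg C hq
  rw [hq, mul_div_cancel_left₀ _ hυ, charpoly, det_fin_three]
  simp only [charmatrix_apply, diagonal_apply, Fin.isValue, ↓reduceIte, Fin.reduceEq, zero_sub,
    det_fin_three, trace_fin_three, map_add, map_sub, map_mul] at hminorsC hdetC ⊢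
  linear_combination X * hminorsC - hdetC

variable {m n : Type*} [Fintype n]

theorem rank_add_finrank_ker_toLin' [DecidableEq n] (B : Matrix m n K) :
    B.rank + Module.finrank K (LinearMap.ker (toLin' B)) = Fintype.card n := by
  rw [rank, ← toLin'_apply', LinearMap.finrank_range_add_finrank_ker,
    Module.finrank_fintype_fun_eq_card]

theorem rank_eq_one_iff_of_mulVec_one_eq [Nonempty m] {B : Matrix m n K} {r : K}
    (hr : r ≠ 0) (hB : B *ᵥ 1 = r • 1) : B.rank = 1 ↔ ∀ i j, B i = B j := by
  have h1 : (1 : m → K) ∈ LinearMap.range B.mulVecLin :=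
    ⟨r⁻¹ • 1, by rw [mulVecLin_apply, mulVec_smul, hB, smul_smul, inv_mul_cancel₀ hr, one_smul]⟩
  have hle : K ∙ (1 : m → K) ≤ LinearMap.range B.mulVecLin :=
    (Submodule.span_singleton_le_iff_mem _ _).2 h1
  calc B.rank = 1 ↔ LinearMap.range B.mulVecLin = K ∙ 1 := by
        refine ⟨fun h => (Submodule.eq_of_le_of_finrank_le hle ?_).symm, fun h => ?_⟩
        · rw [← rank, h, finrank_span_singleton one_ne_zero]
        · rw [rank, h, finrank_span_singleton one_ne_zero]
    _ ↔ LinearMap.range B.mulVecLin ≤ K ∙ 1 := ⟨le_of_eq, fun h => le_antisymm h hle⟩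
    _ ↔ ∀ j, B.col j ∈ K ∙ 1 := by
        rw [range_mulVecLin, Submodule.span_le, Set.range_subset_iff]; rfl
    _ ↔ ∀ i j, B i = B j := by
        simp only [Submodule.mem_span_singleton_one_iff, col_apply, funext_iff]
        exact forall_comm.trans (forall_congr' fun _ => forall_comm)

end Matrix

theorem rows_sub_smul_one_eq_iff (a b c d e f υ μ : ℝ) (hμ : 2 * μ = a + d - e - f) :
    (∀ i j, (!![a, b, υ - a - b; c, d, υ - c - d; e, f, υ - e - f] - μ • 1) i =
      (!![a, b, υ - a - b; c, d, υ - c - d; e, f, υ - e - f] - μ • 1) j) ↔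
      c = e ∧ b = f ∧ d - a + e - f = 0 := by
  simp only [funext_iff, Matrix.sub_apply, of_apply, cons_val', cons_val_fin_one, Matrix.smul_apply,
    smul_eq_mul, Fin.forall_fin_succ, Fin.isValue, cons_val_zero, cons_val_succ, IsEmpty.forall_iff,
    and_true, one_apply_eq, mul_one, Nat.reduceAdd, Fin.succ_zero_eq_one, ne_eq, zero_ne_one,
    not_false_eq_true, one_apply_ne, mul_zero, sub_zero, Fin.succ_one_eq_two, Fin.reduceEq,
    Fin.succ_ne_zero, and_self, true_and, sub_eq_self, mul_eq_zero, sub_right_inj, or_true]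
  constructor
  · rintro ⟨⟨-, -, hbf, -⟩, ⟨-, hce, hdf, -⟩, -⟩
    exact ⟨hce, hbf, by linarith⟩
  · rintro ⟨rfl, rfl, h⟩
    obtain rfl : d = a - c + b := by linarith
    obtain rfl : μ = a - c := by linarith
    ring_nf
    simp

/-- with entries parametrized as rows `(a,b,υ-a-b)`, `(c,d,υ-c-d)`,
`(e,f,υ-e-f)`, if `α₁ ≠ 2υ` and `α₁² = 4α₀`, the eigenvalue `α₁/2` has algebraic
multiplicity 2, and it has geometric multiplicity 2 iff `c = e`, `b = f` and
`d - a + e - f = 0`. -/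
theorem stmt_4 (a b c d e f υ : ℝ) (hυ : υ ≠ 0)
    (A : Matrix (Fin 3) (Fin 3) ℝ)
    (hA : A = !![a, b, υ - a - b; c, d, υ - c - d; e, f, υ - e - f])
    (α₀ α₁ : ℝ) (hα₀ : α₀ = A.det / υ) (hα₁ : α₁ = A.trace - υ)
    (h1 : α₁ ≠ 2 * υ) (h2 : α₁ ^ 2 = 4 * α₀) :
    A.charpoly.rootMultiplicity (α₁ / 2) = 2 ∧
    (Module.finrank ℝ (LinearMap.ker (Matrix.toLin' (A - (α₁ / 2) • 1))) = 2 ↔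
      (c = e ∧ b = f ∧ d - a + e - f = 0)) := by
  obtain ⟨μ, rfl⟩ : ∃ μ, α₁ = 2 * μ := ⟨α₁ / 2, by ring⟩
  rw [mul_div_cancel_left₀ μ two_ne_zero]
  have hrowSum : A *ᵥ 1 = υ • 1 := by
    subst hA
    ext i
    fin_cases i <;> simp [mulVec, dotProduct, Fin.sum_univ_three]
  have hμυ : μ ≠ υ := fun h => h1 (by rw [h])
  have hcharpoly : A.charpoly = (X - C υ) * (X - C μ) ^ 2 := by
    rw [charpoly_eq_of_mulVec_one_eq hυ hrowSum, ← hα₁, ← hα₀,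
      show α₀ = μ ^ 2 by linear_combination -h2 / 4]
    simp only [map_pow, map_mul, map_ofNat]
    ring
  refine ⟨?_, ?_⟩
  · rw [hcharpoly, rootMultiplicity_mul (by simp [X_sub_C_ne_zero]), rootMultiplicity_X_sub_C_pow,
      rootMultiplicity_X_sub_C, if_neg hμυ]
  · have hB : (A - μ • 1) *ᵥ 1 = (υ - μ) • 1 := by
      rw [sub_mulVec, smul_mulVec, one_mulVec, hrowSum, sub_smul]
    have hrank := rank_add_finrank_ker_toLin' (A - μ • 1)
    rw [Fintype.card_fin] at hrank
    have hμ : 2 * μ = a + d - e - f := by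
      rw [hα₁, hA, trace_fin_three]
      simp only [of_apply, cons_val', cons_val_zero, cons_val_fin_one, cons_val_one, cons_val]
      ring
    rw [← rows_sub_smul_one_eq_iff a b c d e f υ μ hμ, ← hA,
      ← rank_eq_one_iff_of_mulVec_one_eq (sub_ne_zero.2 hμυ.symm) hB]
    omega
end

section
/- Let h₁, …, h_m : ℝ^{m+1} → ℝ with h_i(x,λ) = μ x_i λ + q_i(x) where μ ≠ 0 and q_i homogeneous quadratic. If h_i and h_j (i ≠ j) share a nonconstant common factor, then that common factor must be linear, of the form μλ + Σ_l c_l x_l, and h_i = x_i(μλ + Σ_l c_l x_l), h_j = x_j(μλ + Σ_l c_l x_l). -/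
/-!
View everything as polynomials in `λ` over `ℝ[x]`, where `h k = (μ x_k) λ + q_k` has `λ`-degree 1.
A common factor `p` of `h i` and `h j` has `λ`-degree at most 1. If its `λ`-degree were 0, then
`p` would divide both `μ x_i` and `μ x_j`, which are coprime, so `p` would be constant.
Hence `p = a λ + B` with cofactors `w_k ∈ ℝ[x]`, and comparing `λ`-coefficients gives
`a w_k = μ x_k` for `k = i, j`; so `a` is a nonzero constant and `w_k = (μ / a) x_k`.
Comparing constant terms, `B x_i` is a multiple of the quadratic form `q_i`, so `B` is linear,
and `h k = x_k (μ λ + (μ / a) B)`.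
-/

namespace MvPolynomial

section SumUnit

variable (R σ : Type*) [CommSemiring R]

noncomputable def sumUnitEquivPolynomial :
    MvPolynomial (σ ⊕ Unit) R ≃ₐ[R] Polynomial (MvPolynomial σ R) :=
  (renameEquiv R (Equiv.optionEquivSumPUnit σ).symm).trans (optionEquivLeft R σ)

variable {R σ}

@[simp]
lemma sumUnitEquivPolynomial_X_inl (l : σ) :
    sumUnitEquivPolynomial R σ (X (Sum.inl l)) = Polynomial.C (X l) := by
  simp [sumUnitEquivPolynomial, optionEquivLeft_X_some]

@[simp]
lemma sumUnitEquivPolynomial_X_inr :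
    sumUnitEquivPolynomial R σ (X (Sum.inr ())) = Polynomial.X := by
  simp [sumUnitEquivPolynomial, optionEquivLeft_X_none]

@[simp]
lemma sumUnitEquivPolynomial_C (r : R) :
    sumUnitEquivPolynomial R σ (C r) = Polynomial.C (C r) := by
  simp [sumUnitEquivPolynomial, optionEquivLeft_C]

@[simp]
lemma sumUnitEquivPolynomial_rename_inl (f : MvPolynomial σ R) :
    sumUnitEquivPolynomial R σ (rename Sum.inl f) = Polynomial.C f := by
  induction f using MvPolynomial.induction_on with
  | C r => simp
  | add f g hf hg => simp [hf, hg]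
  | mul_X f l hf => simp [hf]

lemma exists_rename_inl_eq {f : MvPolynomial (σ ⊕ Unit) R}
    (hf : ∀ d ∈ f.support, d (Sum.inr ()) = 0) : ∃ g, rename Sum.inl g = f := by
  refine exists_rename_eq_of_vars_subset_range f Sum.inl Sum.inl_injective fun v hv => ?_
  obtain ⟨d, hd, hvd⟩ := (mem_vars_iff_mem_support v).mp hv
  rcases v with l | ⟨⟩
  · exact ⟨l, rfl⟩
  · exact absurd (hf d hd) (Finsupp.mem_support_iff.mp hvd)

end SumUnit

section Homogeneous

variable {R σ : Type*} [CommSemiring R]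

lemma IsHomogeneous.of_mul_X {f : MvPolynomial σ R} {i : σ} {n : ℕ}
    (h : (f * X i).IsHomogeneous (n + 1)) : f.IsHomogeneous n := by
  intro d hd
  have := h (show coeff (d + Finsupp.single i 1) (f * X i) ≠ 0 by rwa [coeff_mul_X])
  rw [map_add, Finsupp.weight_single, Pi.one_apply, smul_eq_mul, mul_one] at this
  omega

lemma IsHomogeneous.exists_eq_sum_C_mul_X [Fintype σ] {f : MvPolynomial σ R}
    (h : f.IsHomogeneous 1) : ∃ c : σ → R, f = ∑ l, C (c l) * X l := by
  rw [← mem_homogeneousSubmodule, homogeneousSubmodule_one_eq_span_X,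
    Submodule.mem_span_range_iff_exists_fun] at h
  obtain ⟨c, hc⟩ := h
  exact ⟨c, by simp [← hc, smul_eq_C_mul]⟩

end Homogeneous

lemma isUnit_of_dvd_X_of_dvd_X {R σ : Type*} [CommRing R] [IsDomain R]
    {r : MvPolynomial σ R} {i j : σ} (hij : i ≠ j) (hi : r ∣ X i) (hj : r ∣ X j) : IsUnit r := by
  obtain ⟨s, hs⟩ := hi
  refine (X_prime.irreducible.isUnit_or_isUnit hs).resolve_right fun hsu => hij ?_
  exact X_dvd_X.mp ((Associated.symm ⟨hsu.unit, hs.symm⟩).dvd.trans hj)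

end MvPolynomial

namespace Polynomial

lemma exists_eq_C_of_mul_eq_linear {R : Type*} [CommRing R] [IsDomain R] {P W : R[X]} {a b : R}
    (ha : a ≠ 0) (hP : P.natDegree = 1) (h : P * W = C a * X + C b) :
    ∃ w, W = C w ∧ P.coeff 1 * w = a ∧ P.coeff 0 * w = b := by
  have hP0 : P ≠ 0 := by rintro rfl; simp at hP
  have hW0 : W ≠ 0 := by
    rintro rfl
    simpa [← h] using natDegree_linear (b := b) ha
  have hW : W.natDegree = 0 := by
    have := congrArg natDegree h
    rw [natDegree_mul hP0 hW0, natDegree_linear ha] at this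
    omega
  obtain ⟨w, rfl⟩ : ∃ w, W = C w := ⟨_, eq_C_of_natDegree_eq_zero hW⟩
  exact ⟨w, rfl, by simpa using congrArg (coeff · 1) h, by simpa using congrArg (coeff · 0) h⟩

end Polynomial

namespace MvPolynomial

variable {K σ : Type*} [Field K]

lemma natDegree_eq_one_of_dvd_C_mul_X_add_C {μ : K} (hμ : μ ≠ 0) {i j : σ} (hij : i ≠ j)
    {bi bj : MvPolynomial σ K} {P : Polynomial (MvPolynomial σ K)} (hP : ¬IsUnit P)
    (hPi : P ∣ Polynomial.C (C μ * X i) * Polynomial.X + Polynomial.C bi)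
    (hPj : P ∣ Polynomial.C (C μ * X j) * Polynomial.X + Polynomial.C bj) :
    P.natDegree = 1 := by
  have hμX (k : σ) : C μ * X k ≠ 0 := mul_ne_zero (C_ne_zero.mpr hμ) (X_ne_zero k)
  have hdeg := Polynomial.natDegree_linear (b := bi) (hμX i)
  have hle : P.natDegree ≤ 1 :=
    hdeg ▸ Polynomial.natDegree_le_of_dvd hPi (Polynomial.ne_zero_of_natDegree_gt (hdeg ▸ one_pos))
  suffices P.natDegree ≠ 0 by omega
  intro h0
  rw [Polynomial.eq_C_of_natDegree_eq_zero h0] at hP hPi hPj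
  have hdvd (k : σ) (b : MvPolynomial σ K)
      (hk : Polynomial.C (P.coeff 0) ∣ Polynomial.C (C μ * X k) * Polynomial.X + Polynomial.C b) :
      P.coeff 0 ∣ X k := by
    have := (Polynomial.C_dvd_iff_dvd_coeff _ _).mp hk 1
    simp only [Polynomial.coeff_add, Polynomial.coeff_C_mul_X, Polynomial.coeff_C, if_true,
      one_ne_zero, if_false, add_zero] at this
    exact (IsUnit.dvd_mul_left (hμ.isUnit.map C)).mp this
  exact hP (Polynomial.isUnit_C.mpr (isUnit_of_dvd_X_of_dvd_X hij (hdvd i bi hPi) (hdvd j bj hPj)))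

theorem exists_linear_of_dvd_C_mul_X_add_C [Fintype σ] {μ : K} (hμ : μ ≠ 0)
    {Q : σ → MvPolynomial σ K} (hQ : ∀ k, (Q k).IsHomogeneous 2) {i j : σ} (hij : i ≠ j)
    {P : Polynomial (MvPolynomial σ K)} (hP : ¬IsUnit P)
    (hPi : P ∣ Polynomial.C (C μ * X i) * Polynomial.X + Polynomial.C (Q i))
    (hPj : P ∣ Polynomial.C (C μ * X j) * Polynomial.X + Polynomial.C (Q j)) :
    ∃ c : σ → K,
      (∃ u : Kˣ, P = Polynomial.C (C (u : K)) *
        (Polynomial.C (C μ) * Polynomial.X + Polynomial.C (∑ l, C (c l) * X l))) ∧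
      Polynomial.C (C μ * X i) * Polynomial.X + Polynomial.C (Q i) =
        Polynomial.C (X i) *
          (Polynomial.C (C μ) * Polynomial.X + Polynomial.C (∑ l, C (c l) * X l)) ∧
      Polynomial.C (C μ * X j) * Polynomial.X + Polynomial.C (Q j) =
        Polynomial.C (X j) *
          (Polynomial.C (C μ) * Polynomial.X + Polynomial.C (∑ l, C (c l) * X l)) := by
  have hμX (k : σ) : C μ * X k ≠ 0 := mul_ne_zero (C_ne_zero.mpr hμ) (X_ne_zero k)
  have hP1 := natDegree_eq_one_of_dvd_C_mul_X_add_C hμ hij hP hPi hPj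
  obtain ⟨Wi, hWi⟩ := hPi
  obtain ⟨Wj, hWj⟩ := hPj
  obtain ⟨wi, rfl, hAi, hBi⟩ := Polynomial.exists_eq_C_of_mul_eq_linear (hμX i) hP1 hWi.symm
  obtain ⟨wj, rfl, hAj, -⟩ := Polynomial.exists_eq_C_of_mul_eq_linear (hμX j) hP1 hWj.symm
  have hA : IsUnit (P.coeff 1) := isUnit_of_dvd_X_of_dvd_X hij
    ((IsUnit.dvd_mul_left (hμ.isUnit.map C)).mp ⟨wi, hAi.symm⟩)
    ((IsUnit.dvd_mul_left (hμ.isUnit.map C)).mp ⟨wj, hAj.symm⟩)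
  obtain ⟨a, ha, hAa⟩ := isUnit_iff_eq_C_of_isReduced.mp hA
  set ν := a⁻¹ * μ
  have hν : ν ≠ 0 := mul_ne_zero (inv_ne_zero ha.ne_zero) hμ
  have hAν : P.coeff 1 * C ν = C μ := by rw [hAa, ← C_mul, mul_inv_cancel_left₀ ha.ne_zero]
  have hwi : wi = C ν * X i := mul_left_cancel₀ hA.ne_zero (by rw [hAi, ← mul_assoc, hAν])
  have hwj : wj = C ν * X j := mul_left_cancel₀ hA.ne_zero (by rw [hAj, ← mul_assoc, hAν])
  obtain ⟨c, hc⟩ : ∃ c : σ → K, C ν * P.coeff 0 = ∑ l, C (c l) * X l := by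
    refine (IsHomogeneous.of_mul_X (i := i) ?_).exists_eq_sum_C_mul_X
    rw [mul_comm (C ν), mul_assoc, ← hwi, hBi]
    exact hQ i
  have hL : P * Polynomial.C (C ν) =
      Polynomial.C (C μ) * Polynomial.X + Polynomial.C (∑ l, C (c l) * X l) := by
    conv_lhs => rw [Polynomial.eq_X_add_C_of_natDegree_le_one hP1.le]
    rw [← hc, ← hAν]
    simp only [map_mul]
    ring
  refine ⟨c, ⟨Units.mk0 ν⁻¹ (inv_ne_zero hν), ?_⟩, ?_, ?_⟩
  · rw [← hL, Units.val_mk0, mul_left_comm, ← Polynomial.C_mul, ← C_mul, inv_mul_cancel₀ hν,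
      C_1, Polynomial.C_1, mul_one]
  · rw [hWi, ← hL, hwi, map_mul]
    ring
  · rw [hWj, ← hL, hwj, map_mul]
    ring

end MvPolynomial

open MvPolynomial

/-- if `h i = μ x_i λ + q i` and `h j = μ x_j λ + q j` (`i ≠ j`, `μ ≠ 0`,
`q`'s homogeneous quadratics in the `x` variables) share a nonconstant common factor,
then that factor is linear of the form `μλ + Σ c_l x_l` (up to a unit), and
`h i = x_i (μλ + Σ c_l x_l)`, `h j = x_j (μλ + Σ c_l x_l)`. -/
theorem stmt_8 (m : ℕ) (μ : ℝ) (hμ : μ ≠ 0)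
    (q : Fin m → MvPolynomial (Fin m ⊕ Unit) ℝ)
    (hq2 : ∀ i, (q i).IsHomogeneous 2)
    (hqx : ∀ i, ∀ d ∈ (q i).support, d (Sum.inr ()) = 0)
    (h : Fin m → MvPolynomial (Fin m ⊕ Unit) ℝ)
    (hdef : ∀ i, h i = C μ * X (Sum.inl i) * X (Sum.inr ()) + q i)
    (i j : Fin m) (hij : i ≠ j)
    (p : MvPolynomial (Fin m ⊕ Unit) ℝ) (hp : 0 < p.totalDegree)
    (hpi : p ∣ h i) (hpj : p ∣ h j) :
    ∃ c : Fin m → ℝ,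
      (∃ u : ℝˣ, p = C (u : ℝ) *
        (C μ * X (Sum.inr ()) + ∑ l, C (c l) * X (Sum.inl l))) ∧
      h i = X (Sum.inl i) * (C μ * X (Sum.inr ()) + ∑ l, C (c l) * X (Sum.inl l)) ∧
      h j = X (Sum.inl j) * (C μ * X (Sum.inr ()) + ∑ l, C (c l) * X (Sum.inl l)) := by
  set φ := sumUnitEquivPolynomial ℝ (Fin m)
  choose Q hQ using fun k => exists_rename_inl_eq (hqx k)
  have hQ2 (k : Fin m) : (Q k).IsHomogeneous 2 :=
    (IsHomogeneous.rename_isHomogeneous_iff Sum.inl_injective).mp (hQ k ▸ hq2 k)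
  have hφh (k : Fin m) :
      φ (h k) = Polynomial.C (C μ * X k) * Polynomial.X + Polynomial.C (Q k) := by
    simp [φ, hdef, ← hQ]
  have hφp : ¬IsUnit (φ p) := fun hu =>
    hp.ne' (isUnit_iff_totalDegree_of_isReduced.mp ((MulEquiv.isUnit_map φ).mp hu)).2
  obtain ⟨c, ⟨u, hu⟩, hi, hj⟩ := exists_linear_of_dvd_C_mul_X_add_C hμ hQ2 hij hφp
    (hφh i ▸ map_dvd φ hpi) (hφh j ▸ map_dvd φ hpj)
  have hL : φ (C μ * X (Sum.inr ()) + ∑ l, C (c l) * X (Sum.inl l)) =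
      Polynomial.C (C μ) * Polynomial.X + Polynomial.C (∑ l, C (c l) * X l) := by
    simp [φ, map_sum]
  refine ⟨c, ⟨u, φ.injective ?_⟩, φ.injective ?_, φ.injective ?_⟩
  · rw [hu, map_mul, hL, sumUnitEquivPolynomial_C]
  · rw [hφh, hi, map_mul, hL, sumUnitEquivPolynomial_X_inl]
  · rw [hφh, hj, map_mul, hL, sumUnitEquivPolynomial_X_inl]
end

section
/- Consider the 3×3 matrix J(f₀,f₁,f₂) with rows (f₀+f₁, f₂, 0), (f₁, f₀+f₂, 0), (f₁, f₂, f₀) (network C₁&C₂). If f₁ ≠ 0, f₂ ≠ 0 and f₁+f₂ ≠ 0, then f₀ is an eigenvalue with algebraic and geometric multiplicity 2, with eigenvectors (-f₂/f₁, 1, 0) and (0, 0, 1), and f₀+f₁+f₂ is a simple eigenvalue with eigenvector (1,1,1). -/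
/-!
`J` is the rank-one perturbation `f₀ • 1 + u vᵀ` of a scalar matrix, with `u = (1,1,1)`
and `v = (f₁,f₂,0)`. Hence `J w = f₀ w + (v ⬝ w) u`: every `w ⟂ v` is an eigenvector for
`f₀`, `u` is one for `f₀ + v ⬝ u = f₀ + f₁ + f₂`, and `J - f₀ • 1 = u vᵀ` has kernel `v⟂`,
a plane since `v ≠ 0`.
Shifting the characteristic polynomial `X³ - (v ⬝ u) X²` of `u vᵀ` by `f₀` gives
`(X - f₀)² (X - (f₀ + f₁ + f₂))`, whose two roots are distinct because `f₁ + f₂ ≠ 0`.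
-/

open Polynomial Matrix

namespace Matrix

variable {n : Type*} [Fintype n] [DecidableEq n]

section CommRing

variable {R : Type*} [CommRing R]

theorem smul_one_add_vecMulVec_mulVec (μ : R) (u v w : n → R) :
    (μ • 1 + vecMulVec u v) *ᵥ w = μ • w + (v ⬝ᵥ w) • u := by
  rw [add_mulVec, smul_mulVec, one_mulVec, vecMulVec_mulVec, op_smul_eq_smul]

theorem charpoly_smul_one_add_vecMulVec [Nonempty n] (μ : R) (u v : n → R) :
    (μ • 1 + vecMulVec u v).charpoly =
      (X - C μ) ^ (Fintype.card n - 1) * (X - C (μ + v ⬝ᵥ u)) := by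
  have hshift : μ • 1 + vecMulVec u v = vecMulVec u v - scalar n (-μ) := by
    rw [scalar_apply, ← smul_one_eq_diagonal, neg_smul, sub_neg_eq_add, add_comm]
  obtain ⟨k, hk⟩ : ∃ k, Fintype.card n = k + 1 := Nat.exists_eq_add_one.mpr Fintype.card_pos
  rw [hshift, charpoly_sub_scalar, charpoly_vecMulVec, hk, Nat.add_sub_cancel, dotProduct_comm]
  simp only [smul_eq_C_mul, sub_comp, mul_comp, C_comp, X_pow_comp, map_neg, map_add]
  ring

theorem rootMultiplicity_charpoly_smul_one_add_vecMulVec [IsDomain R] [Nonempty n]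
    (μ : R) (u v : n → R) (h : v ⬝ᵥ u ≠ 0) :
    (μ • 1 + vecMulVec u v).charpoly.rootMultiplicity μ = Fintype.card n - 1 := by
  classical
  rw [charpoly_smul_one_add_vecMulVec, rootMultiplicity_mul
    (mul_ne_zero (pow_ne_zero _ (X_sub_C_ne_zero _)) (X_sub_C_ne_zero _)),
    rootMultiplicity_X_sub_C_pow, rootMultiplicity_X_sub_C]
  simp [h]

theorem rootMultiplicity_charpoly_smul_one_add_vecMulVec_add [IsDomain R] [Nonempty n]
    (μ : R) (u v : n → R) (h : v ⬝ᵥ u ≠ 0) :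
    (μ • 1 + vecMulVec u v).charpoly.rootMultiplicity (μ + v ⬝ᵥ u) = 1 := by
  rw [charpoly_smul_one_add_vecMulVec, rootMultiplicity_mul
    (mul_ne_zero (pow_ne_zero _ (X_sub_C_ne_zero _)) (X_sub_C_ne_zero _)),
    rootMultiplicity_eq_zero (by simp [h]), rootMultiplicity_X_sub_C_self]

end CommRing

section Field

variable {K : Type*} [Field K]

theorem ker_toLin'_vecMulVec {u : n → K} (hu : u ≠ 0) (v : n → K) :
    LinearMap.ker (toLin' (vecMulVec u v)) = LinearMap.ker (dotProductEquiv K n v) := by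
  ext w
  simp [vecMulVec_mulVec, hu]

theorem finrank_ker_toLin'_vecMulVec {u v : n → K} (hu : u ≠ 0) (hv : v ≠ 0) :
    Module.finrank K (LinearMap.ker (toLin' (vecMulVec u v))) = Fintype.card n - 1 := by
  rw [ker_toLin'_vecMulVec hu, ← Module.finrank_fintype_fun_eq_card (R := K),
    ← Module.Dual.finrank_ker_add_one_of_ne_zero ((dotProductEquiv K n).map_ne_zero_iff.mpr hv),
    Nat.add_sub_cancel]

end Field

end Matrix

theorem stmt_13_general (f₀ f₁ f₂ : ℝ) (h1 : f₁ ≠ 0) (h12 : f₁ + f₂ ≠ 0)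
    (J : Matrix (Fin 3) (Fin 3) ℝ)
    (hJ : J = !![f₀ + f₁, f₂, 0; f₁, f₀ + f₂, 0; f₁, f₂, f₀]) :
    J.charpoly.rootMultiplicity f₀ = 2 ∧
    Module.finrank ℝ (LinearMap.ker (Matrix.toLin' (J - f₀ • 1))) = 2 ∧
    J.mulVec ![-f₂ / f₁, 1, 0] = f₀ • ![-f₂ / f₁, 1, 0] ∧
    J.mulVec ![0, 0, 1] = f₀ • ![0, 0, 1] ∧
    J.charpoly.rootMultiplicity (f₀ + f₁ + f₂) = 1 ∧
    J.mulVec ![1, 1, 1] = (f₀ + f₁ + f₂) • ![1, 1, 1] := by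
  set u : Fin 3 → ℝ := ![1, 1, 1]
  set v : Fin 3 → ℝ := ![f₁, f₂, 0]
  have hJ_rankOne : J = f₀ • 1 + vecMulVec u v := by
    rw [hJ]
    ext i j
    fin_cases i <;> fin_cases j <;> simp [u, v, vecMulVec, one_apply]
  have hvu : v ⬝ᵥ u = f₁ + f₂ := by simp [u, v, dotProduct, Fin.sum_univ_three]
  have hu : u ≠ 0 := fun h ↦ one_ne_zero (congrFun h 0)
  have hv : v ≠ 0 := fun h ↦ h1 (congrFun h 0)
  have hf₀ : ∀ w, v ⬝ᵥ w = 0 → J *ᵥ w = f₀ • w := fun w hw ↦ by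
    rw [hJ_rankOne, smul_one_add_vecMulVec_mulVec, hw, zero_smul, add_zero]
  rw [← hvu] at h12
  refine ⟨?_, ?_, hf₀ _ ?_, hf₀ _ ?_, ?_, ?_⟩
  · rw [hJ_rankOne, rootMultiplicity_charpoly_smul_one_add_vecMulVec _ _ _ h12]; rfl
  · rw [hJ_rankOne, add_sub_cancel_left, finrank_ker_toLin'_vecMulVec hu hv]; rfl
  · simp only [v, dotProduct, Fin.sum_univ_three, cons_val_zero, cons_val_one, cons_val,
      mul_one, mul_zero, add_zero]
    field_simp
    ring
  · simp [v, dotProduct, Fin.sum_univ_three]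
  · rw [add_assoc, ← hvu, hJ_rankOne,
      rootMultiplicity_charpoly_smul_one_add_vecMulVec_add _ _ _ h12]
  · rw [hJ_rankOne, smul_one_add_vecMulVec_mulVec, hvu, ← add_smul, add_assoc]

/-- for the matrix `J` of network `C₁&C₂`, if `f₁ ≠ 0`, `f₂ ≠ 0` and
`f₁+f₂ ≠ 0`, then `f₀` is an eigenvalue with algebraic and geometric multiplicity 2
with the stated eigenvectors, and `f₀+f₁+f₂` is simple with eigenvector `(1,1,1)`. -/
theorem stmt_13 (f₀ f₁ f₂ : ℝ) (h1 : f₁ ≠ 0) (h2 : f₂ ≠ 0) (h12 : f₁ + f₂ ≠ 0)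
    (J : Matrix (Fin 3) (Fin 3) ℝ)
    (hJ : J = !![f₀ + f₁, f₂, 0; f₁, f₀ + f₂, 0; f₁, f₂, f₀]) :
    J.charpoly.rootMultiplicity f₀ = 2 ∧
    Module.finrank ℝ (LinearMap.ker (Matrix.toLin' (J - f₀ • 1))) = 2 ∧
    J.mulVec ![-f₂ / f₁, 1, 0] = f₀ • ![-f₂ / f₁, 1, 0] ∧
    J.mulVec ![0, 0, 1] = f₀ • ![0, 0, 1] ∧
    J.charpoly.rootMultiplicity (f₀ + f₁ + f₂) = 1 ∧
    J.mulVec ![1, 1, 1] = (f₀ + f₁ + f₂) • ![1, 1, 1] :=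
  stmt_13_general f₀ f₁ f₂ h1 h12 J hJ
end

section
/- Consider the 3×3 matrix J(f₀,f₁,f₂) with rows (f₀+f₁, f₂, 0), (f₁, f₀, f₂), (f₁+f₂, 0, f₀) (network C₁&A₂). If f₂ ≠ 0, then the two eigenvalues of J other than f₀+f₁+f₂ are non-real complex conjugates; explicitly, the quadratic factor of the characteristic polynomial has discriminant α₁² - 4α₀ = -3f₂² < 0, where α₀ = det(J)/(f₀+f₁+f₂) and α₁ = tr(J) - (f₀+f₁+f₂), assuming also f₀+f₁+f₂ ≠ 0. -/
/-!
Every row of `J` sums to `υ = f₀ + f₁ + f₂`, so the all-ones vector is an eigenvector and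
`υ` is a root of the cubic `X³ - tr J X² + c X - det J`. Dividing it out leaves the quadratic
`X² - α₁ X + α₀`, and for this `J` one computes `α₁ = 2f₀ - f₂`, `α₀ = f₀² - f₀f₂ + f₂²`,
whence `α₁² - 4α₀ = -3f₂²`. A real quadratic with negative discriminant splits over `ℂ` into a
pair of non-real conjugate linear factors.
-/

open Polynomial Matrix

namespace Matrix

variable {n : Type*} [Fintype n] [DecidableEq n]

lemma charpoly_of_card_eq_three {R : Type*} [CommRing R] [Nontrivial R] (M : Matrix n n R)
    (hn : Fintype.card n = 3) :
    M.charpoly = X ^ 3 - C M.trace * X ^ 2 + C (M.charpoly.coeff 1) * X - C M.det := by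
  have : Nonempty n := by rw [← Fintype.card_pos_iff]; lia
  ext i
  by_cases hi : i ∈ Finset.range 4
  · fin_cases hi
    · simp [det_eq_sign_charpoly_coeff, hn, pow_succ]
    · simp
    · simp [trace_eq_neg_charpoly_coeff, hn]
    · simpa [leadingCoeff, charpoly_natDegree_eq_dim, hn, coeff_X] using
        M.charpoly_monic.leadingCoeff
  · rw [Finset.mem_range, not_lt] at hi
    suffices M.charpoly.coeff i = 0 by
      simpa [show i ≠ 3 by lia, show i ≠ 2 by lia, show 1 ≠ i by lia, show i ≠ 0 by lia,
        coeff_X, coeff_C, coeff_X_pow]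
    apply coeff_eq_zero_of_natDegree_lt
    rw [charpoly_natDegree_eq_dim, hn]
    lia

lemma isRoot_charpoly_of_mulVec_eq_smul {R : Type*} [CommRing R] [IsDomain R]
    {M : Matrix n n R} {v : n → R} (hv : v ≠ 0) {μ : R} (h : M *ᵥ v = μ • v) :
    M.charpoly.IsRoot μ := by
  rw [IsRoot, eval_charpoly, ← exists_mulVec_eq_zero_iff]
  refine ⟨v, hv, ?_⟩
  rw [sub_mulVec, h, scalar_apply, ← smul_one_eq_diagonal, smul_mulVec, one_mulVec, sub_self]

lemma charpoly_eq_X_sub_C_mul_of_isRoot {K : Type*} [Field K] (M : Matrix n n K)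
    (hn : Fintype.card n = 3) {υ : K} (hυ : υ ≠ 0) (hroot : M.charpoly.IsRoot υ) :
    M.charpoly = (X - C υ) * (X ^ 2 - C (M.trace - υ) * X + C (M.det / υ)) := by
  have hM := M.charpoly_of_card_eq_three hn
  have hcoeff : M.charpoly.coeff 1 = υ * (M.trace - υ) + M.det / υ := by
    have := hroot.eq_zero
    rw [hM] at this
    simp only [eval_sub, eval_add, eval_mul, eval_pow, eval_C, eval_X] at this
    field_simp
    linear_combination this
  have hdet : C M.det = C υ * C (M.det / υ) := by rw [← C_mul, mul_div_cancel₀ _ hυ]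
  rw [hM, hcoeff]
  simp only [map_add, map_mul, map_sub]
  linear_combination -hdet

end Matrix

lemma Complex.X_sub_C_mul_X_sub_C_conj (z : ℂ) :
    (X - C z) * (X - C (starRingEnd ℂ z)) =
      (X ^ 2 - C (2 * z.re) * X + C (normSq z)).map (algebraMap ℝ ℂ) := by
  have hre : algebraMap ℝ ℂ (2 * z.re) = z + starRingEnd ℂ z := by simp [add_conj]
  have hnormSq : algebraMap ℝ ℂ (normSq z) = z * starRingEnd ℂ z := by simp [mul_conj]
  simp only [Polynomial.map_add, Polynomial.map_sub, Polynomial.map_mul, Polynomial.map_pow,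
    map_X, map_C]
  rw [hre, hnormSq, map_add, map_mul]
  ring

lemma Polynomial.exists_map_eq_X_sub_C_mul_X_sub_C_conj {a b : ℝ} (h : a ^ 2 - 4 * b < 0) :
    ∃ z : ℂ, z.im ≠ 0 ∧
      (X ^ 2 - C a * X + C b).map (algebraMap ℝ ℂ) = (X - C z) * (X - C (starRingEnd ℂ z)) := by
  have hsqrt : Real.sqrt (4 * b - a ^ 2) ^ 2 = 4 * b - a ^ 2 := Real.sq_sqrt (by linarith)
  refine ⟨⟨a / 2, Real.sqrt (4 * b - a ^ 2) / 2⟩, ?_, ?_⟩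
  · exact (div_pos (Real.sqrt_pos.2 (by linarith)) two_pos).ne'
  · rw [Complex.X_sub_C_mul_X_sub_C_conj, Complex.normSq_apply]
    congr 5
    · ring
    · linear_combination -hsqrt / 4

def networkC₁A₂ {R : Type*} [CommRing R] (f₀ f₁ f₂ : R) : Matrix (Fin 3) (Fin 3) R :=
  !![f₀ + f₁, f₂, 0; f₁, f₀, f₂; f₁ + f₂, 0, f₀]

namespace networkC₁A₂

variable {R : Type*} [CommRing R] (f₀ f₁ f₂ : R)

lemma mulVec_one : networkC₁A₂ f₀ f₁ f₂ *ᵥ 1 = (f₀ + f₁ + f₂) • 1 := by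
  ext i
  fin_cases i <;> simp [networkC₁A₂, vecHead, vecTail] <;> ring

lemma trace_eq : (networkC₁A₂ f₀ f₁ f₂).trace = 3 * f₀ + f₁ := by
  simp [networkC₁A₂, trace_fin_three]
  ring

lemma det_eq :
    (networkC₁A₂ f₀ f₁ f₂).det = (f₀ + f₁ + f₂) * (f₀ ^ 2 - f₀ * f₂ + f₂ ^ 2) := by
  simp [networkC₁A₂, det_fin_three]
  ring

end networkC₁A₂

/-- for the matrix `J` of network `C₁&A₂`, if `f₂ ≠ 0` and
`υ = f₀+f₁+f₂ ≠ 0`, the quadratic factor of the characteristic polynomial has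
discriminant `α₁² - 4α₀ = -3f₂² < 0`, and the two eigenvalues other than `υ` are
non-real complex conjugates. -/
theorem stmt_14 (f₀ f₁ f₂ : ℝ) (h2 : f₂ ≠ 0) (hυ : f₀ + f₁ + f₂ ≠ 0)
    (J : Matrix (Fin 3) (Fin 3) ℝ)
    (hJ : J = !![f₀ + f₁, f₂, 0; f₁, f₀, f₂; f₁ + f₂, 0, f₀])
    (α₀ α₁ : ℝ) (hα₀ : α₀ = J.det / (f₀ + f₁ + f₂))
    (hα₁ : α₁ = J.trace - (f₀ + f₁ + f₂)) :
    α₁ ^ 2 - 4 * α₀ = -3 * f₂ ^ 2 ∧ α₁ ^ 2 - 4 * α₀ < 0 ∧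
    ∃ z : ℂ, z.im ≠ 0 ∧
      (J.map (algebraMap ℝ ℂ)).charpoly =
        (X - C ((f₀ : ℂ) + f₁ + f₂)) * (X - C z) * (X - C ((starRingEnd ℂ) z)) := by
  obtain rfl : J = networkC₁A₂ f₀ f₁ f₂ := hJ
  have hdisc : α₁ ^ 2 - 4 * α₀ = -3 * f₂ ^ 2 := by
    rw [hα₀, hα₁, networkC₁A₂.det_eq, networkC₁A₂.trace_eq, mul_div_cancel_left₀ _ hυ]
    ring
  have hneg : α₁ ^ 2 - 4 * α₀ < 0 := by
    rw [hdisc]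
    linarith [sq_pos_of_ne_zero h2]
  obtain ⟨z, hz, hquad⟩ := exists_map_eq_X_sub_C_mul_X_sub_C_conj hneg
  have hroot := isRoot_charpoly_of_mulVec_eq_smul one_ne_zero
    (networkC₁A₂.mulVec_one f₀ f₁ f₂)
  refine ⟨hdisc, hneg, z, hz, ?_⟩
  rw [charpoly_map, charpoly_eq_X_sub_C_mul_of_isRoot _ (Fintype.card_fin 3) hυ hroot,
    ← hα₀, ← hα₁, Polynomial.map_mul, hquad, mul_assoc]
  simp
end

section
/- Let J be a 3×3 real matrix with constant row sum υ whose eigenvalue μ ≠ υ has geometric multiplicity 2. Then ℝ³ = span{(1,1,1)} ⊕ E_μ where E_μ = ker(J - μ·Id), and every polydiagonal subspace of ℝ³ is invariant under J. -/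
/-! Let `g = J - μ` and `c = (1,1,1)`. Constant row sums make `c` an eigenvector of `g` for the
nonzero eigenvalue `υ - μ`, so `c ∈ range g`; as `ker g` has codimension one, rank–nullity forces
`range g = span {c}` and `span {c} ⊕ ker g = ℝ³`. Hence `J x ∈ μ x + span {c}` for every `x`,
and every subspace containing `c` — in particular every polydiagonal — is `J`-invariant. -/

/-- A polydiagonal subspace of `ℝⁿ` is a subspace cut out by coordinate equalities. -/
def IsPolydiagonal {n : ℕ} (V : Submodule ℝ (Fin n → ℝ)) : Prop :=
  ∃ r : Fin n → Fin n → Prop, ∀ x : Fin n → ℝ, x ∈ V ↔ ∀ i j, r i j → x i = x j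

open Module Submodule
open scoped Matrix

theorem Matrix.mulVec_const_one_of_row_sum {m n R : Type*} [Fintype n] [NonAssocSemiring R]
    {J : Matrix m n R} {υ : R} (hrow : ∀ i, ∑ j, J i j = υ) :
    J *ᵥ (fun _ => 1) = υ • fun _ => 1 := by
  ext i
  simp [Matrix.mulVec, dotProduct, hrow]

theorem IsPolydiagonal.const_mem {n : ℕ} {V : Submodule ℝ (Fin n → ℝ)} (hV : IsPolydiagonal V)
    (a : ℝ) : (fun _ => a) ∈ V := by
  obtain ⟨r, hr⟩ := hV
  exact (hr _).2 fun _ _ _ => rfl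

namespace LinearMap

variable {K V : Type*} [Field K] [AddCommGroup V] [Module K V]

theorem apply_mem_of_range_sub_smul_le {f : V →ₗ[K] V} {μ : K} {p : Submodule K V}
    (h : range (f - μ • id) ≤ p) {x : V} (hx : x ∈ p) : f x ∈ p := by
  have hfx : f x = (f - μ • id : V →ₗ[K] V) x + μ • x := by simp
  rw [hfx]
  exact p.add_mem (h (mem_range_self _ x)) (p.smul_mem μ hx)

variable {g : V →ₗ[K] V} {c : V} {a : K}

theorem mem_range_of_apply_eq_smul (hc : g c = a • c) (ha : a ≠ 0) : c ∈ range g :=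
  ⟨a⁻¹ • c, by rw [map_smul, hc, inv_smul_smul₀ ha]⟩

theorem notMem_ker_of_apply_eq_smul (hc : g c = a • c) (ha : a ≠ 0) (hc0 : c ≠ 0) :
    c ∉ ker g := by
  rw [mem_ker, hc]
  exact smul_ne_zero ha hc0

variable [FiniteDimensional K V]

theorem range_eq_span_of_apply_eq_smul (hc : g c = a • c) (ha : a ≠ 0) (hc0 : c ≠ 0)
    (hker : finrank K (ker g) + 1 = finrank K V) : range g = K ∙ c := by
  have hle : K ∙ c ≤ range g :=
    (span_singleton_le_iff_mem _ _).2 (mem_range_of_apply_eq_smul hc ha)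
  refine (eq_of_le_of_finrank_le hle ?_).symm
  have := g.finrank_range_add_finrank_ker
  rw [finrank_span_singleton hc0]
  omega

theorem isCompl_span_ker_of_apply_eq_smul (hc : g c = a • c) (ha : a ≠ 0) (hc0 : c ≠ 0)
    (hker : finrank K (ker g) + 1 = finrank K V) : IsCompl (K ∙ c) (ker g) := by
  rw [isCompl_iff_disjoint _ _ (by rw [finrank_span_singleton hc0]; omega), disjoint_comm,
    disjoint_span_singleton' hc0]
  exact notMem_ker_of_apply_eq_smul hc ha hc0

end LinearMap

/-- if a 3×3 real matrix `J` with constant row sum `υ` has an eigenvalue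
`μ ≠ υ` of geometric multiplicity 2, then `ℝ³ = span{(1,1,1)} ⊕ E_μ` and every
polydiagonal subspace of `ℝ³` is invariant under `J`. -/
theorem stmt_17 (J : Matrix (Fin 3) (Fin 3) ℝ) (υ μ : ℝ)
    (hrow : ∀ i, ∑ j, J i j = υ) (hμ : μ ≠ υ)
    (hgeo : Module.finrank ℝ (LinearMap.ker (Matrix.toLin' (J - μ • 1))) = 2) :
    IsCompl (Submodule.span ℝ {(fun _ => (1 : ℝ) : Fin 3 → ℝ)})
      (LinearMap.ker (Matrix.toLin' (J - μ • 1))) ∧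
    ∀ Δ : Submodule ℝ (Fin 3 → ℝ), IsPolydiagonal Δ → ∀ x ∈ Δ, J.mulVec x ∈ Δ := by
  set g := Matrix.toLin' (J - μ • 1)
  have hg : g = Matrix.toLin' J - μ • LinearMap.id := by
    simp [g, Matrix.toLin'_one]
  have hc : g (fun _ => 1) = (υ - μ) • fun _ => 1 := by
    simp [g, Matrix.mulVec_const_one_of_row_sum hrow, sub_smul]
  have ha : υ - μ ≠ 0 := sub_ne_zero.2 hμ.symm
  have hc0 : (fun _ => (1 : ℝ) : Fin 3 → ℝ) ≠ 0 := one_ne_zero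
  have hker : finrank ℝ (LinearMap.ker g) + 1 = finrank ℝ (Fin 3 → ℝ) := by simp [hgeo]
  refine ⟨LinearMap.isCompl_span_ker_of_apply_eq_smul hc ha hc0 hker, fun Δ hΔ x hx => ?_⟩
  rw [← Matrix.toLin'_apply]
  refine LinearMap.apply_mem_of_range_sub_smul_le (μ := μ) ?_ hx
  rw [← hg, LinearMap.range_eq_span_of_apply_eq_smul hc ha hc0 hker, span_singleton_le_iff_mem]
  exact hΔ.const_mem 1
end

section
/- Let N be a network with n cells and μ a semisimple eigenvalue of all admissible Jacobians such that ℝⁿ = Δ ⊕ E_μ for some synchrony subspace Δ, where E_μ is the μ-eigenspace. Then every polydiagonal subspace Δ' of ℝⁿ containing Δ is invariant under every matrix of the form J = f₀·Id + Σ_j f_j A_j. Concretely: if Δ ⊆ Δ' with Δ' polydiagonal and ℝⁿ = Δ ⊕ E_μ with both Δ and E_μ invariant under J, then Δ' = Δ ⊕ (Δ' ∩ E_μ) and Δ' is J-invariant. -/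
theorem IsCompl.eq_sup_inf_of_le {α : Type*} [Lattice α] [IsModularLattice α] [BoundedOrder α]
    {a b c : α} (h : IsCompl a b) (hac : a ≤ c) : c = a ⊔ c ⊓ b := by
  rw [inf_comm, ← sup_inf_assoc_of_le b hac, h.codisjoint.eq_top, top_inf_eq]

theorem Submodule.apply_mem_of_le_of_isCompl {R M : Type*} [Ring R] [AddCommGroup M]
    [Module R M] {f : M →ₗ[R] M} {μ : R} {p q p' : Submodule R M} (hpq : IsCompl p q)
    (hp : ∀ x ∈ p, f x ∈ p) (hq : ∀ x ∈ q, f x = μ • x) (hpp' : p ≤ p') :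
    ∀ x ∈ p', f x ∈ p' := by
  intro x hx
  rw [hpq.eq_sup_inf_of_le hpp'] at hx
  obtain ⟨a, ha, b, hb, rfl⟩ := Submodule.mem_sup.mp hx
  rw [map_add, hq b hb.2]
  exact p'.add_mem (hpp' (hp a ha)) (p'.smul_mem μ hb.1)

theorem stmt_18_general (n : ℕ) (μ : ℝ) (J : (Fin n → ℝ) →ₗ[ℝ] (Fin n → ℝ))
    (Δ Eμ Δ' : Submodule ℝ (Fin n → ℝ))
    (hcompl : IsCompl Δ Eμ)
    (hΔinv : ∀ x ∈ Δ, J x ∈ Δ)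
    (hE : ∀ x ∈ Eμ, J x = μ • x)
    (hle : Δ ≤ Δ') :
    Δ' = Δ ⊔ (Δ' ⊓ Eμ) ∧ ∀ x ∈ Δ', J x ∈ Δ' :=
  ⟨hcompl.eq_sup_inf_of_le hle, Submodule.apply_mem_of_le_of_isCompl hcompl hΔinv hE hle⟩

/-- if `ℝⁿ = Δ ⊕ E_μ` with `Δ` a `J`-invariant (synchrony) polydiagonal
subspace and `J` acting as `μ·Id` on `E_μ`, then every polydiagonal `Δ'` containing `Δ`
satisfies `Δ' = Δ ⊕ (Δ' ∩ E_μ)` and is `J`-invariant. -/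
theorem stmt_18 (n : ℕ) (μ : ℝ) (J : (Fin n → ℝ) →ₗ[ℝ] (Fin n → ℝ))
    (Δ Eμ Δ' : Submodule ℝ (Fin n → ℝ))
    (hpolyΔ : IsPolydiagonal Δ) (hpolyΔ' : IsPolydiagonal Δ')
    (hcompl : IsCompl Δ Eμ)
    (hΔinv : ∀ x ∈ Δ, J x ∈ Δ)
    (hE : ∀ x ∈ Eμ, J x = μ • x)
    (hle : Δ ≤ Δ') :
    Δ' = Δ ⊔ (Δ' ⊓ Eμ) ∧ ∀ x ∈ Δ', J x ∈ Δ' :=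
  stmt_18_general n μ J Δ Eμ Δ' hcompl hΔinv hE hle
end
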